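/- Let Q0 = [0,1]^{n+m}, X a metric space, and f : Q0 → X Lipschitz. Then the (n,m)-mapping content is countably subadditive on subsets of Q0: for any countable collection {A_i}_{i=1}^∞ of subsets of Q0, H^{n,m}_∞(f, ∪_i A_i) ≤ Σ_{i=1}^∞ H^{n,m}_∞(f, A_i). -/

import Mathlib

open Metric Set MeasureTheory ENNReal

noncomputable section

/-- The `k`-dimensional Hausdorff content of a set in a metric space, defined via
countable covers by closed balls. -/
def hContent {X : Type*} [MetricSpace X] (k : ℕ) (S : Set X) : ℝ≥0∞ :=
  ⨅ (B : ℕ → Set X) (_ : S ⊆ ⋃ i, B i) (_ : ∀ i, ∃ x r, B i = Metric.closedBall x r),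
    ∑' i, EMetric.diam (B i) ^ k

/-- The `k`-dimensional Hausdorff measure of a set in a metric space, defined via
countable covers by closed balls of diameter at most `δ`, letting `δ → 0`. -/
def hMeasure {X : Type*} [MetricSpace X] (k : ℕ) (S : Set X) : ℝ≥0∞ :=
  ⨆ (δ : ℝ≥0∞) (_ : 0 < δ),
    ⨅ (B : ℕ → Set X) (_ : S ⊆ ⋃ i, B i)
      (_ : ∀ i, (∃ x r, B i = Metric.closedBall x r) ∧ EMetric.diam (B i) ≤ δ),
      ∑' i, EMetric.diam (B i) ^ k

/-- The closed unit cube `[0,1]^d` in `ℝ^d`. -/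
def unitCube (d : ℕ) : Set (EuclideanSpace ℝ (Fin d)) :=
  {p | ∀ i, p i ∈ Set.Icc (0 : ℝ) 1}

/-- A dyadic subcube of `[0,1]^d`: it has side length `2⁻ᵏ` and lower-left corner `z/2ᵏ`. -/
structure DyadicCube (d : ℕ) : Type where
  k : ℕ
  z : Fin d → ℕ
  hz : ∀ i, z i + 1 ≤ 2 ^ k

namespace DyadicCube

/-- The side length of a dyadic cube. -/
def side {d : ℕ} (Q : DyadicCube d) : ℝ := (2 : ℝ)⁻¹ ^ Q.k

/-- The center of a dyadic cube. -/
def center {d : ℕ} (Q : DyadicCube d) (i : Fin d) : ℝ :=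
  ((Q.z i : ℝ) + 1 / 2) * (2 : ℝ)⁻¹ ^ Q.k

/-- The dyadic cube as a (closed) subset of `ℝ^d`. -/
def toSet {d : ℕ} (Q : DyadicCube d) : Set (EuclideanSpace ℝ (Fin d)) :=
  {p | ∀ i, |p i - Q.center i| ≤ Q.side / 2}

/-- `Q.scaled λ` is the cube `λQ`, with the same center as `Q` and `λ` times the side length. -/
def scaled {d : ℕ} (Q : DyadicCube d) (lam : ℝ) : Set (EuclideanSpace ℝ (Fin d)) :=
  {p | ∀ i, |p i - Q.center i| ≤ lam * Q.side / 2}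

end DyadicCube

/-- The `(n,m)`-mapping content `H^{n,m}_∞(f, A)`: the infimum of
`∑ H^n_∞(f(Q_i)) side(Q_i)^m` over countable covers of `A` by dyadic cubes of `[0,1]^{n+m}`
with pairwise disjoint interiors. -/
def mContent (n m : ℕ) {X : Type*} [MetricSpace X]
    (f : EuclideanSpace ℝ (Fin (n + m)) → X)
    (A : Set (EuclideanSpace ℝ (Fin (n + m)))) : ℝ≥0∞ :=
  ⨅ (S : Set (DyadicCube (n + m))) (_ : A ⊆ ⋃ Q ∈ S, Q.toSet)
    (_ : S.Pairwise fun Q Q' => interior Q.toSet ∩ interior Q'.toSet = ∅),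
    ∑' Q : S, hContent n (f '' Q.1.toSet) * ENNReal.ofReal (Q.1.side ^ m)

/-- The alternative `(n,m)`-mapping content `Ĥ^{n,m}_∞(f, A)`: the infimum of
`∑ H^n_∞(f(S_i)) diam(S_i)^m` over countable covers of `A` by arbitrary subsets of
`[0,1]^{n+m}`. -/
def altMContent (n m : ℕ) {X : Type*} [MetricSpace X]
    (f : EuclideanSpace ℝ (Fin (n + m)) → X)
    (A : Set (EuclideanSpace ℝ (Fin (n + m)))) : ℝ≥0∞ :=
  ⨅ (S : ℕ → Set (EuclideanSpace ℝ (Fin (n + m)))) (_ : A ⊆ ⋃ i, S i)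
    (_ : ∀ i, S i ⊆ unitCube (n + m)),
    ∑' i, hContent n (f '' S i) * EMetric.diam (S i) ^ m

/-- The first `n` coordinates of a point of `ℝ^{n+m} = ℝ^n × ℝ^m`. -/
def xpart (n m : ℕ) (p : EuclideanSpace ℝ (Fin (n + m))) : EuclideanSpace ℝ (Fin n) :=
  WithLp.toLp 2 (fun i => p (Fin.castAdd m i))

/-- The last `m` coordinates of a point of `ℝ^{n+m} = ℝ^n × ℝ^m`. -/
def ypart (n m : ℕ) (p : EuclideanSpace ℝ (Fin (n + m))) : EuclideanSpace ℝ (Fin m) :=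
  WithLp.toLp 2 (fun j => p (Fin.natAdd n j))

/-- The point `(x, y) ∈ ℝ^{n+m}` built from `x ∈ ℝ^n`, `y ∈ ℝ^m`. -/
def pairup (n m : ℕ) (x : EuclideanSpace ℝ (Fin n)) (y : EuclideanSpace ℝ (Fin m)) :
    EuclideanSpace ℝ (Fin (n + m)) :=
  WithLp.toLp 2 (fun i : Fin (n + m) => (Fin.addCases (fun i₁ => x i₁) (fun j => y j) i : ℝ))

/-- The horizontal slice `E_y = E ∩ (ℝ^n × {y})`. -/
def cubeSlice (n m : ℕ) (E : Set (EuclideanSpace ℝ (Fin (n + m))))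
    (y : EuclideanSpace ℝ (Fin m)) : Set (EuclideanSpace ℝ (Fin (n + m))) :=
  {p ∈ E | ypart n m p = y}

/-- `f` is `C`-bi-Lipschitz on `s`. -/
def BiLipschitzOnWith {α β : Type*} [PseudoMetricSpace α] [PseudoMetricSpace β]
    (C : ℝ) (f : α → β) (s : Set α) : Prop :=
  ∀ x ∈ s, ∀ y ∈ s, C⁻¹ * dist x y ≤ dist (f x) (f y) ∧ dist (f x) (f y) ≤ C * dist x y

/-- `(E, g)` is a Hard Sard pair for `f` with constant `C`:
(i) `g` is a globally `C`-bi-Lipschitz homeomorphism of `ℝ^{n+m}` (in particular it restricts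
to a bi-Lipschitz map on `E`);
(ii) writing `F = f ∘ g⁻¹`, for `(x,y), (x',y') ∈ g(E)` one has `F(x,y) = F(x',y')` iff `x = x'`;
(iii) the map `(x,y) ↦ (F(x,y), y)` is `C`-bi-Lipschitz on `g(E)`, where `X × ℝ^m` carries the
max metric.  Conditions (ii) and (iii) are expressed at points `p = g⁻¹(x,y)`, `q = g⁻¹(x',y')`
of `E`. -/
def IsHardSardPairWith (n m : ℕ) {X : Type*} [MetricSpace X]
    (f : EuclideanSpace ℝ (Fin (n + m)) → X)
    (E : Set (EuclideanSpace ℝ (Fin (n + m))))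
    (g : EuclideanSpace ℝ (Fin (n + m)) → EuclideanSpace ℝ (Fin (n + m)))
    (C : ℝ) : Prop :=
  Function.Surjective g ∧
  BiLipschitzOnWith C g Set.univ ∧
  (∀ p ∈ E, ∀ q ∈ E, (f p = f q ↔ xpart n m (g p) = xpart n m (g q))) ∧
  (∀ p ∈ E, ∀ q ∈ E,
    C⁻¹ * dist (g p) (g q) ≤ dist (f p, ypart n m (g p)) (f q, ypart n m (g q)) ∧
    dist (f p, ypart n m (g p)) (f q, ypart n m (g q)) ≤ C * dist (g p) (g q))

/-- `E` is a Hard Sard set for `f` with constant `C`. -/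
def IsHardSardSetWith (n m : ℕ) {X : Type*} [MetricSpace X]
    (f : EuclideanSpace ℝ (Fin (n + m)) → X)
    (E : Set (EuclideanSpace ℝ (Fin (n + m)))) (C : ℝ) : Prop :=
  ∃ g, IsHardSardPairWith n m f E g C

/-- `sup_{x,y ∈ s} | d(f(x), f(y)) - N(x - y) |`. -/
def mdSup {d : ℕ} {X : Type*} [MetricSpace X] (f : EuclideanSpace ℝ (Fin d) → X)
    (s : Set (EuclideanSpace ℝ (Fin d))) (N : Seminorm ℝ (EuclideanSpace ℝ (Fin d))) : ℝ :=
  ⨆ x : s, ⨆ y : s, |dist (f x.1) (f y.1) - N (x.1 - y.1)|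

/-- `md_f` on a set `s` (a cube of side length `side`):
`side⁻¹ · inf_N sup_{x,y ∈ s} | d(f(x), f(y)) - N(x-y) |`, the infimum being over all
seminorms `N` on `ℝ^d`. -/
def mdf {d : ℕ} {X : Type*} [MetricSpace X] (f : EuclideanSpace ℝ (Fin d) → X)
    (s : Set (EuclideanSpace ℝ (Fin d))) (side : ℝ) : ℝ :=
  side⁻¹ * ⨅ N : Seminorm ℝ (EuclideanSpace ℝ (Fin d)), mdSup f s N

/-- The coordinate plane spanned by the standard basis vectors `e_i`, `i ∈ s`. -/
def coordPlane {d : ℕ} (s : Finset (Fin d)) : Submodule ℝ (EuclideanSpace ℝ (Fin d)) :=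
  Submodule.span ℝ {v | ∃ i ∈ s, v = EuclideanSpace.single i (1 : ℝ)}

/-! Choose for each `A i` a cover by dyadic cubes whose weighted sum exceeds
`mContent n m f (A i)` by at most `δ i`, with `∑ δ i ≤ ε`. The union of these covers covers
`⋃ i, A i` but its cubes may overlap. Two dyadic cubes with intersecting interiors are nested,
so the outermost cubes of the union are interior-disjoint and still cover; dropping the others
only decreases the sum. -/

namespace DyadicCube

variable {d : ℕ}

lemma side_pos (Q : DyadicCube d) : 0 < Q.side := by
  unfold side; positivity

lemma mem_toSet_iff {Q : DyadicCube d} {p : EuclideanSpace ℝ (Fin d)} :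
    p ∈ Q.toSet ↔ ∀ i, p i ∈ Icc (Q.z i * Q.side) ((Q.z i + 1) * Q.side) := by
  refine forall_congr' fun i => ?_
  rw [abs_sub_le_iff, mem_Icc, center, ← side]
  constructor <;> rintro ⟨h₁, h₂⟩ <;> constructor <;> linarith

lemma mem_Ioo_of_mem_interior {Q : DyadicCube d} {p : EuclideanSpace ℝ (Fin d)}
    (hp : p ∈ interior Q.toSet) (i : Fin d) :
    p i ∈ Ioo (Q.z i * Q.side) ((Q.z i + 1) * Q.side) := by
  set π := EuclideanSpace.proj (𝕜 := ℝ) i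
  have hπ : π ≠ 0 := fun h => by
    simpa [π] using congrArg (fun g => g (EuclideanSpace.single i 1)) h
  rw [← interior_Icc]
  change π p ∈ _
  rw [← mem_preimage,
    (π.isOpenMap_of_ne_zero hπ).preimage_interior_eq_interior_preimage π.continuous]
  exact interior_mono (fun q hq => mem_toSet_iff.1 hq i) hp

lemma side_mul_two_pow {Q Q' : DyadicCube d} (hk : Q'.k ≤ Q.k) :
    Q.side * 2 ^ (Q.k - Q'.k) = Q'.side := by
  rw [side, side, ← Nat.add_sub_cancel' hk, pow_add, Nat.add_sub_cancel_left, mul_assoc,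
    ← mul_pow, inv_mul_cancel₀ two_ne_zero, one_pow, mul_one]

lemma z_eq_div_of_interior_inter {Q Q' : DyadicCube d} (hk : Q'.k ≤ Q.k)
    (h : (interior Q.toSet ∩ interior Q'.toSet).Nonempty) (i : Fin d) :
    Q'.z i = Q.z i / 2 ^ (Q.k - Q'.k) := by
  obtain ⟨p, hp, hp'⟩ := h
  obtain ⟨h₁, h₂⟩ := mem_Ioo_of_mem_interior hp i
  obtain ⟨h₁', h₂'⟩ := mem_Ioo_of_mem_interior hp' i
  rw [← side_mul_two_pow hk] at h₁' h₂'
  have hs := Q.side_pos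
  refine (Nat.div_eq_of_lt_le ?_ ?_).symm
  · have : ((Q'.z i * 2 ^ (Q.k - Q'.k) : ℕ) : ℝ) * Q.side < (Q.z i + 1 : ℕ) * Q.side := by
      push_cast; linarith
    exact Nat.lt_succ_iff.1 (by exact_mod_cast lt_of_mul_lt_mul_right this hs.le)
  · have : ((Q.z i : ℕ) : ℝ) * Q.side < ((Q'.z i + 1) * 2 ^ (Q.k - Q'.k) : ℕ) * Q.side := by
      push_cast; linarith
    exact_mod_cast lt_of_mul_lt_mul_right this hs.le

lemma toSet_subset_of_k_le_of_interior_inter {Q Q' : DyadicCube d} (hk : Q'.k ≤ Q.k)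
    (h : (interior Q.toSet ∩ interior Q'.toSet).Nonempty) : Q.toSet ⊆ Q'.toSet := by
  intro q hq
  rw [mem_toSet_iff] at hq ⊢
  intro i
  obtain ⟨hq₁, hq₂⟩ := hq i
  have hs := Q.side_pos
  have hpow : 0 < 2 ^ (Q.k - Q'.k) := Nat.two_pow_pos _
  have hlo : ((Q.z i / 2 ^ (Q.k - Q'.k) * 2 ^ (Q.k - Q'.k) : ℕ) : ℝ) ≤ Q.z i :=
    Nat.cast_le.2 (Nat.div_mul_le_self _ _)
  have hhi : ((Q.z i + 1 : ℕ) : ℝ) ≤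
      (Q.z i / 2 ^ (Q.k - Q'.k) * 2 ^ (Q.k - Q'.k) + 2 ^ (Q.k - Q'.k) : ℕ) :=
    Nat.cast_le.2 (Nat.lt_div_mul_add hpow)
  push_cast at hlo hhi
  rw [z_eq_div_of_interior_inter hk h i, ← side_mul_two_pow hk]
  constructor <;> nlinarith

lemma eq_of_k_eq_of_interior_inter {Q Q' : DyadicCube d} (hk : Q.k = Q'.k)
    (h : (interior Q.toSet ∩ interior Q'.toSet).Nonempty) : Q = Q' := by
  have hz : Q.z = Q'.z := funext fun i => by
    simpa [hk] using (z_eq_div_of_interior_inter hk.ge h i).symm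
  cases Q
  cases Q'
  simp_all

/-- `M` keeps the cubes of minimal generation `k` among the cubes of `S` containing them:
unlike maximality for inclusion, this singles out one cube even when `d = 0`. -/
lemma exists_subset_pairwise_interior_disjoint_cover (S : Set (DyadicCube d)) :
    ∃ M ⊆ S, M.Pairwise (fun Q Q' => interior Q.toSet ∩ interior Q'.toSet = ∅) ∧
      ⋃ Q ∈ S, Q.toSet ⊆ ⋃ Q ∈ M, Q.toSet := by
  classical
  refine ⟨{Q ∈ S | ∀ Q' ∈ S, Q.toSet ⊆ Q'.toSet → Q.k ≤ Q'.k}, sep_subset _ _, ?_, ?_⟩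
  · rintro Q ⟨hQS, hQ⟩ Q' ⟨hQ'S, hQ'⟩ hne
    by_contra hmeet
    rw [← Ne, ← nonempty_iff_ne_empty] at hmeet
    wlog hk : Q'.k ≤ Q.k generalizing Q Q'
    · exact this hQ'S hQ' hQS hQ hne.symm (by rwa [inter_comm]) (le_of_not_ge hk)
    have hk' := hQ Q' hQ'S (toSet_subset_of_k_le_of_interior_inter hk hmeet)
    exact hne (eq_of_k_eq_of_interior_inter (le_antisymm hk' hk) hmeet)
  · refine iUnion₂_subset fun Q hQ => ?_
    have hex : ∃ k, ∃ Q' ∈ S, Q.toSet ⊆ Q'.toSet ∧ Q'.k = k := ⟨_, Q, hQ, subset_rfl, rfl⟩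
    obtain ⟨Q₀, hQ₀, hsub, hk₀⟩ := Nat.find_spec hex
    refine hsub.trans (subset_biUnion_of_mem (u := toSet) ⟨hQ₀, fun Q' hQ' hQ₀Q' => ?_⟩)
    exact hk₀ ▸ Nat.find_min' hex ⟨Q', hQ', hsub.trans hQ₀Q', rfl⟩

end DyadicCube

section MappingContent

variable {n m : ℕ} {X : Type*} [MetricSpace X] (f : EuclideanSpace ℝ (Fin (n + m)) → X)

def cubeWeight (Q : DyadicCube (n + m)) : ℝ≥0∞ :=
  hContent n (f '' Q.toSet) * ENNReal.ofReal (Q.side ^ m)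

lemma mContent_le_tsum_of_subset_biUnion {A : Set (EuclideanSpace ℝ (Fin (n + m)))}
    {S : Set (DyadicCube (n + m))} (hA : A ⊆ ⋃ Q ∈ S, Q.toSet) :
    mContent n m f A ≤ ∑' Q : S, cubeWeight f Q := by
  obtain ⟨M, hMS, hM, hcov⟩ := DyadicCube.exists_subset_pairwise_interior_disjoint_cover S
  calc mContent n m f A ≤ ∑' Q : M, cubeWeight f Q :=
        iInf₂_le_of_le M (hA.trans hcov) (iInf_le _ hM)
    _ ≤ ∑' Q : S, cubeWeight f Q := ENNReal.tsum_mono_subtype _ hMS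

lemma exists_subset_biUnion_tsum_le_of_mContent_lt {A : Set (EuclideanSpace ℝ (Fin (n + m)))}
    {c : ℝ≥0∞} (h : mContent n m f A < c) :
    ∃ S : Set (DyadicCube (n + m)), A ⊆ ⋃ Q ∈ S, Q.toSet ∧ ∑' Q : S, cubeWeight f Q ≤ c := by
  simp only [mContent, iInf_lt_iff] at h
  obtain ⟨S, hA, -, hS⟩ := h
  exact ⟨S, hA, hS.le⟩

end MappingContent

theorem mContent_countably_subadditive_general (n m : ℕ) (X : Type*) [MetricSpace X]
    (f : EuclideanSpace ℝ (Fin (n + m)) → X)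
    (A : ℕ → Set (EuclideanSpace ℝ (Fin (n + m)))) :
    mContent n m f (⋃ i, A i) ≤ ∑' i, mContent n m f (A i) := by
  refine ENNReal.le_of_forall_pos_le_add fun ε hε hfin => ?_
  obtain ⟨δ, hδ, hδε⟩ := ENNReal.exists_pos_sum_of_countable (ENNReal.coe_ne_zero.2 hε.ne') ℕ
  have hlt (i : ℕ) : mContent n m f (A i) < mContent n m f (A i) + δ i :=
    ENNReal.lt_add_right (ne_top_of_le_ne_top hfin.ne (ENNReal.le_tsum i))
      (ENNReal.coe_ne_zero.2 (hδ i).ne')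
  choose S hAS hS using fun i => exists_subset_biUnion_tsum_le_of_mContent_lt f (hlt i)
  calc mContent n m f (⋃ i, A i)
      ≤ ∑' Q : ⋃ i, S i, cubeWeight f Q :=
        mContent_le_tsum_of_subset_biUnion f (by rw [biUnion_iUnion]; exact iUnion_mono hAS)
    _ ≤ ∑' i, ∑' Q : S i, cubeWeight f Q := ENNReal.tsum_iUnion_le_tsum _ _
    _ ≤ ∑' i, (mContent n m f (A i) + δ i) := ENNReal.tsum_le_tsum hS
    _ = ∑' i, mContent n m f (A i) + ∑' i, (δ i : ℝ≥0∞) := ENNReal.tsum_add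
    _ ≤ ∑' i, mContent n m f (A i) + ε := by gcongr

/-- **Lemma (countable subadditivity).**  If `f : [0,1]^{n+m} → X` is Lipschitz, the mapping
content is countably subadditive on subsets of the unit cube. -/
theorem mContent_countably_subadditive (n m : ℕ) (X : Type*) [MetricSpace X]
    (f : EuclideanSpace ℝ (Fin (n + m)) → X)
    (hf : ∃ K : NNReal, LipschitzOnWith K f (unitCube (n + m)))
    (A : ℕ → Set (EuclideanSpace ℝ (Fin (n + m))))
    (hA : ∀ i, A i ⊆ unitCube (n + m)) :
    mContent n m f (⋃ i, A i) ≤ ∑' i, mContent n m f (A i) :=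
  mContent_countably_subadditive_general n m X f A
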